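/- Let N ≥ 2 be an integer, α, θ ∈ ℝ, and let v = (sin α · e^{iθ}, cos α) ∈ ℂ². Then for every φ ∈ ℝ, the one-step target probability satisfies |(A(φ)·v)₀|² = (2√(N−1)/N)·[ ( (√(N−1)/N)·cos(2α) + (1/N)·sin(2α)·cos(φ+θ) )·(1 − cos φ) − (1/2)·sin(2α)·cos(φ+θ) ] + (√(N−1)/N)·sin(2α)·cos θ + sin² α. -/

import Mathlib

open Real Complex Matrix

/-- The generalized Grover iteration matrix with phase `φ` for a database of size `N`. -/
noncomputable def groverA (N : ℕ) (φ : ℝ) : Matrix (Fin 2) (Fin 2) ℂ :=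
  !![Complex.exp (φ * Complex.I) * ((1 - Complex.exp (φ * Complex.I)) / (N : ℂ) - 1),
     ((Real.sqrt ((N : ℝ) - 1) : ℂ) / (N : ℂ)) * (1 - Complex.exp (φ * Complex.I));
     ((Real.sqrt ((N : ℝ) - 1) : ℂ) / (N : ℂ)) * Complex.exp (φ * Complex.I) *
       (1 - Complex.exp (φ * Complex.I)),
     -(1 / (N : ℂ) + (1 - 1 / (N : ℂ)) * Complex.exp (φ * Complex.I))]

/-- The one-step target probability: the squared modulus of the first component of `A(φ)·v`. -/
noncomputable def targetProb (N : ℕ) (φ : ℝ) (v : Fin 2 → ℂ) : ℝ :=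
  ‖(groverA N φ).mulVec v 0‖ ^ 2

open ComplexConjugate

/-! With `u = e^{iφ}`, `w = e^{iθ}`, `q = 1/N` and `r = √(N-1)/N` (so `r² = q(1-q)`), the first
component of `A(φ) v` is `x + y` with `x = u (q(1-u) - 1) · sin α · w` and `y = r (1-u) cos α`.
Expanding `|x + y|² = |x|² + |y|² + 2 Re(x ȳ)`, everything reduces to three facts about a unit
complex number: `|1-u|² = 2(1 - Re u)`, `u · conj(1-u) = u - 1` and `(1-u)² = -2(1 - Re u) u`. -/

section UnitComplex

variable {u : ℂ}

theorem normSq_one_sub_of_normSq_eq_one (hu : normSq u = 1) :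
    normSq (1 - u) = 2 * (1 - u.re) := by
  rw [normSq_sub, hu, map_one, one_mul, conj_re]
  ring

theorem normSq_ofReal_mul_one_sub_sub_one (hu : normSq u = 1) (q : ℝ) :
    normSq (q * (1 - u) - 1) = 1 - 2 * q * (1 - q) * (1 - u.re) := by
  rw [normSq_sub, normSq_mul, normSq_ofReal, normSq_one_sub_of_normSq_eq_one hu]
  simp only [map_one, mul_one, re_ofReal_mul, sub_re, one_re]
  ring

theorem mul_conj_one_sub_of_normSq_eq_one (hu : normSq u = 1) : u * conj (1 - u) = u - 1 := by
  rw [map_sub, map_one, mul_sub, mul_one, mul_conj, hu, ofReal_one]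

theorem one_sub_sq_of_normSq_eq_one (hu : normSq u = 1) :
    (1 - u) ^ 2 = -2 * (1 - u.re) * u := by
  have h : u * conj u = 1 := by rw [mul_conj, hu, ofReal_one]
  rw [re_eq_add_conj]
  linear_combination (-1 : ℂ) * h

theorem normSq_grover_amplitude {w : ℂ} (hu : normSq u = 1) (hw : normSq w = 1) {q r : ℝ}
    (hr : r ^ 2 = q * (1 - q)) (s c : ℝ) :
    normSq (u * (q * (1 - u) - 1) * (s * w) + r * (1 - u) * c) =
      s ^ 2 + 2 * r ^ 2 * (1 - u.re) * (c ^ 2 - s ^ 2)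
        + 2 * (s * c * r) * (w.re - (w * u).re + 2 * q * (1 - u.re) * (w * u).re) := by
  have hcross : u * (q * (1 - u) - 1) * (s * w) * conj (r * (1 - u) * c) =
      (s * c * r : ℝ) * (w - w * u + (2 * q * (1 - u.re) : ℝ) * (w * u)) := by
    simp only [map_mul, conj_ofReal]
    push_cast
    linear_combination (s * c * r * w * (q * (1 - u) - 1) : ℂ) * mul_conj_one_sub_of_normSq_eq_one hu
      - (s * c * r * q * w : ℂ) * one_sub_sq_of_normSq_eq_one hu
  rw [normSq_add, hcross, re_ofReal_mul]
  simp only [normSq_mul, normSq_ofReal, hu, hw, normSq_ofReal_mul_one_sub_sub_one hu,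
    normSq_one_sub_of_normSq_eq_one hu, sub_re, add_re, re_ofReal_mul]
  linear_combination 2 * s ^ 2 * (1 - u.re) * hr

end UnitComplex

-- Also true at `N = 0`, where both sides are `0` because `√(-1) = 0` and `1 / 0 = 0`.
theorem sqrt_natCast_sub_one_div_sq (N : ℕ) :
    (√((N : ℝ) - 1) / N) ^ 2 = 1 / N * (1 - 1 / N) := by
  rcases N.eq_zero_or_pos with rfl | hN
  · simp
  have hN' : (1 : ℝ) ≤ N := by exact_mod_cast hN
  rw [div_pow, sq_sqrt (by linarith)]
  field_simp

theorem groverA_mulVec_zero (N : ℕ) (φ : ℝ) (v : Fin 2 → ℂ) :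
    (groverA N φ *ᵥ v) 0 = exp (φ * I) * (((1 / N : ℝ) : ℂ) * (1 - exp (φ * I)) - 1) * v 0
      + ((√((N : ℝ) - 1) / N : ℝ) : ℂ) * (1 - exp (φ * I)) * v 1 := by
  simp only [groverA, mulVec, dotProduct, Fin.sum_univ_two, of_apply, cons_val', cons_val_zero,
    cons_val_one, empty_val', cons_val_fin_one]
  push_cast
  ring

theorem stmt_2 (N : ℕ) (α θ : ℝ)
    (v : Fin 2 → ℂ)
    (hv : v = ![(Real.sin α : ℂ) * Complex.exp (θ * Complex.I), (Real.cos α : ℂ)])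
    (φ : ℝ) :
    targetProb N φ v =
      (2 * Real.sqrt ((N : ℝ) - 1) / N) *
        ((Real.sqrt ((N : ℝ) - 1) / N * Real.cos (2 * α)
            + (1 / (N : ℝ)) * Real.sin (2 * α) * Real.cos (φ + θ)) * (1 - Real.cos φ)
          - (1 / 2) * Real.sin (2 * α) * Real.cos (φ + θ))
      + (Real.sqrt ((N : ℝ) - 1) / N) * Real.sin (2 * α) * Real.cos θ
      + Real.sin α ^ 2 := by
  have hunit (x : ℝ) : normSq (exp (x * I)) = 1 := by
    rw [normSq_eq_norm_sq, norm_exp_ofReal_mul_I, one_pow]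
  have hphase : exp (θ * I) * exp (φ * I) = exp ((φ + θ : ℝ) * I) := by
    rw [← Complex.exp_add]
    congr 1
    push_cast
    ring
  rw [targetProb, ← normSq_eq_norm_sq, groverA_mulVec_zero, hv]
  simp only [cons_val_zero, cons_val_one]
  rw [normSq_grover_amplitude (hunit φ) (hunit θ)
    (sqrt_natCast_sub_one_div_sq N), hphase]
  simp only [exp_ofReal_mul_I_re, Real.sin_two_mul, Real.cos_two_mul']
  ring
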